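/- Let n ≥ 2 and p ≥ 1, let G_1,…,G_n be vertex-disjoint finite simple graphs where {u_{i,1},…,u_{i,p}} is a clique of size p in G_i for each i, and let G be the corresponding K_p-gluing obtained by identifying u_{1,q},…,u_{n,q} into a single vertex u_q for each q ∈ {1,…,p}. Fix m ≥ 1 and suppose that for each i ∈ {1,…,n} there is an integer k_i ≥ 0 such that for every m-fold cover (K_i,D_i) of G_i and every set A ⊆ ⋃_{q=1}^{p} K_i(u_{i,q}) with |A ∩ K_i(u_{i,q})| = 1 for each q and A independent in D_i, the number of (K_i,D_i)-colorings of G_i containing A is at least k_i. Then P_DP(G,m) ≥ (∏_{i=0}^{p-1} (m - i)) · (∏_{i=1}^{n} k_i). -/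

import Mathlib

open SimpleGraph Finset

/-- A (standardized) `m`-fold cover of a graph `G`: the vertex set of the cover graph `H`
is `V × Fin m`, where the fiber (list) of a vertex `v` is `L v = {v} × Fin m`.
Every `m`-fold cover in the sense of Dvořák–Postle is isomorphic to one of this form. -/
structure DPCover {V : Type} (G : SimpleGraph V) (m : ℕ) where
  /-- the cover graph -/
  H : SimpleGraph (V × Fin m)
  /-- each fiber induces a complete graph -/
  fiber_complete : ∀ (v : V) (i j : Fin m), i ≠ j → H.Adj (v, i) (v, j)
  /-- cross-edges only join fibers of adjacent vertices -/
  cross : ∀ (u v : V) (i j : Fin m), H.Adj (u, i) (v, j) → u = v ∨ G.Adj u v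
  /-- the cross-edges between the fibers of two adjacent vertices form a matching -/
  matching : ∀ (u v : V), G.Adj u v → ∀ (i j j' : Fin m),
      H.Adj (u, i) (v, j) → H.Adj (u, i) (v, j') → j = j'

/-- `f` encodes an `(L,H)`-coloring of `G`, i.e. the set `{(v, f v) : v ∈ V}` is independent
in the cover graph. -/
def DPCover.IsColoring {V : Type} {G : SimpleGraph V} {m : ℕ} (C : DPCover G m)
    (f : V → Fin m) : Prop :=
  ∀ u v : V, ¬ C.H.Adj (u, f u) (v, f v)

/-- `P_DP(G, (L,H))`: the number of `(L,H)`-colorings of `G`. -/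
noncomputable def DPCover.count {V : Type} [Fintype V] {G : SimpleGraph V} {m : ℕ}
    (C : DPCover G m) : ℕ :=
  Nat.card { f : V → Fin m // C.IsColoring f }

/-- `N((v,j), (L,H))`: the number of `(L,H)`-colorings of `G` containing the vertex `(v, j)`. -/
noncomputable def DPCover.countAt {V : Type} [Fintype V] {G : SimpleGraph V} {m : ℕ}
    (C : DPCover G m) (v : V) (j : Fin m) : ℕ :=
  Nat.card { f : V → Fin m // C.IsColoring f ∧ f v = j }

/-- The DP color function `P_DP(G, m)`. -/
noncomputable def PDP {V : Type} [Fintype V] (G : SimpleGraph V) (m : ℕ) : ℕ :=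
  sInf { n : ℕ | ∃ C : DPCover G m, n = C.count }

/-- The chromatic polynomial `P(G, m)`: the number of proper colorings with colors in `Fin m`. -/
noncomputable def chromPoly {V : Type} [Fintype V] (G : SimpleGraph V) (m : ℕ) : ℕ :=
  Nat.card { f : V → Fin m // ∀ u v : V, G.Adj u v → f u ≠ f v }

/-- The DP color function threshold `τ_DP(G)`: the least `N ≥ χ(G)` such that
`P_DP(G,m) = P(G,m)` for all `m ≥ N` (and `∞` if there is no such `N`). -/
noncomputable def tauDP {V : Type} [Fintype V] (G : SimpleGraph V) : ℕ∞ :=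
  sInf { N : ℕ∞ | ∃ n : ℕ, N = (n : ℕ∞) ∧ G.chromaticNumber ≤ (n : ℕ∞) ∧
      ∀ m : ℕ, n ≤ m → PDP G m = chromPoly G m }

/-- The join `G ∨ K` of two vertex-disjoint graphs. -/
def joinG {α β : Type} (G : SimpleGraph α) (K : SimpleGraph β) : SimpleGraph (α ⊕ β) where
  Adj x y := match x, y with
    | Sum.inl a, Sum.inl a' => G.Adj a a'
    | Sum.inr b, Sum.inr b' => K.Adj b b'
    | Sum.inl _, Sum.inr _ => True
    | Sum.inr _, Sum.inl _ => True
  symm := by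
    refine ⟨?_⟩
    rintro (a | b) (a' | b') h
    · exact h.symm
    · trivial
    · trivial
    · exact h.symm
  loopless := by
    refine ⟨?_⟩
    rintro (a | b) h
    · exact G.loopless.irrefl a h
    · exact K.loopless.irrefl b h

/-- The vertex-gluing of graphs `G i` at the vertices `u i`: identify all the `u i` into a
single vertex (represented by `none`). -/
def VGlue {n : ℕ} {V : Fin n → Type} (G : ∀ i, SimpleGraph (V i)) (u : ∀ i, V i) :
    SimpleGraph (Option (Σ i : Fin n, {x : V i // x ≠ u i})) where
  Adj a b := match a, b with
    | none, none => False
    | none, some ⟨i, x⟩ => (G i).Adj (u i) x.val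
    | some ⟨i, x⟩, none => (G i).Adj x.val (u i)
    | some ⟨i, x⟩, some ⟨j, y⟩ => ∃ h : i = j, (G j).Adj (cast (congrArg V h) x.val) y.val
  symm := by
    refine ⟨?_⟩
    rintro (_ | ⟨i, x⟩) (_ | ⟨j, y⟩) h
    · exact h.elim
    · exact h.symm
    · exact h.symm
    · obtain ⟨rfl, h⟩ := h
      exact ⟨rfl, h.symm⟩
  loopless := by
    refine ⟨?_⟩
    rintro (_ | ⟨i, x⟩) h
    · exact h
    · obtain ⟨h', h⟩ := h
      exact (G i).loopless.irrefl x.val h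

/-- The `K_p`-gluing of graphs `G i`, each with a chosen `p`-clique `U i 0, …, U i (p-1)`:
the cliques are identified coordinatewise (the glued clique is `Sum.inl (Fin p)`). -/
def KGlue {n p : ℕ} {V : Fin n → Type} (G : ∀ i, SimpleGraph (V i))
    (U : ∀ i, Fin p → V i) :
    SimpleGraph ((Fin p) ⊕ (Σ i : Fin n, {x : V i // ∀ q, x ≠ U i q})) where
  Adj a b := match a, b with
    | Sum.inl q, Sum.inl q' => q ≠ q'
    | Sum.inl q, Sum.inr ⟨i, x⟩ => (G i).Adj (U i q) x.val
    | Sum.inr ⟨i, x⟩, Sum.inl q => (G i).Adj x.val (U i q)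
    | Sum.inr ⟨i, x⟩, Sum.inr ⟨j, y⟩ => ∃ h : i = j, (G j).Adj (cast (congrArg V h) x.val) y.val
  symm := by
    refine ⟨?_⟩
    rintro (q | ⟨i, x⟩) (q' | ⟨j, y⟩) h
    · exact h.symm
    · exact h.symm
    · exact h.symm
    · obtain ⟨rfl, h⟩ := h
      exact ⟨rfl, h.symm⟩
  loopless := by
    refine ⟨?_⟩
    rintro (q | ⟨i, x⟩) h
    · exact h rfl
    · obtain ⟨h', h⟩ := h
      exact (G i).loopless.irrefl x.val h

/-- The disjoint union of a family of graphs. -/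
def sigmaG {n : ℕ} {V : Fin n → Type} (G : ∀ i, SimpleGraph (V i)) :
    SimpleGraph (Σ i : Fin n, V i) where
  Adj a b := ∃ h : a.1 = b.1, (G b.1).Adj (cast (congrArg V h) a.2) b.2
  symm := by
    refine ⟨?_⟩
    rintro ⟨i, x⟩ ⟨j, y⟩ ⟨h1, h2⟩
    dsimp only at h1 h2 ⊢
    subst h1
    exact ⟨rfl, h2.symm⟩
  loopless := by
    refine ⟨?_⟩
    rintro ⟨i, x⟩ ⟨h1, h2⟩
    dsimp only at h2
    exact (G i).loopless.irrefl x h2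

/-- chordal: every cycle of length at least `4` has a chord, i.e. an edge of the graph
joining two vertices of the cycle that is not an edge of the cycle. -/
def IsChordal {V : Type} (G : SimpleGraph V) : Prop :=
  ∀ (v : V) (w : G.Walk v v), w.IsCycle → 4 ≤ w.length →
    ∃ x y, x ∈ w.support ∧ y ∈ w.support ∧ G.Adj x y ∧ s(x, y) ∉ w.edges



/-!
A coloring of a cover of the gluing is the same as a coloring `a` of the glued clique together
with colorings of the covers induced on the pieces that agree with `a` on the clique: every edge
of the gluing lies inside one piece. So each independent `a` extends in at least `∏ k_i` ways.
Independent transversals of the clique are counted greedily: by the matching condition each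
already colored clique vertex forbids at most one color of the next fiber, leaving `m - q` choices.
-/

namespace DPCover

variable {V V' : Type} {G : SimpleGraph V} {G' : SimpleGraph V'} {m : ℕ}

def standard (G : SimpleGraph V) (m : ℕ) : DPCover G m where
  H := G □ ⊤
  fiber_complete v i j hij := by simp [hij]
  cross _ _ _ _ h := by
    rcases (boxProd_adj.mp h) with ⟨huv, -⟩ | ⟨-, huv⟩
    · exact Or.inr huv
    · exact Or.inl huv
  matching u v huv i j j' h h' := by
    simp only [boxProd_adj, huv.ne, and_false, or_false] at h h'
    exact h.2.symm.trans h'.2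

def comap (C : DPCover G m) (f : G' ↪g G) : DPCover G' m where
  H := C.H.comap (Prod.map f id)
  fiber_complete v := C.fiber_complete (f v)
  cross _ _ i j h := (C.cross _ _ i j h).imp (fun h => f.injective h) f.map_adj_iff.mp
  matching u v huv := C.matching (f u) (f v) (f.map_adj_iff.mpr huv)

theorem IsColoring.comap {C : DPCover G m} {F : V → Fin m} (hF : C.IsColoring F)
    (f : G' ↪g G) : (C.comap f).IsColoring (F ∘ f) :=
  fun u v => hF (f u) (f v)

theorem isColoring_of_comap {ι : Type} {W : ι → Type} {G' : ∀ i, SimpleGraph (W i)}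
    (C : DPCover G m) (f : ∀ i, G' i ↪g G)
    (hcover : ∀ w z, G.Adj w z → ∃ i x y, f i x = w ∧ f i y = z)
    {F : V → Fin m} (hF : ∀ i, (C.comap (f i)).IsColoring (F ∘ f i)) : C.IsColoring F := by
  intro w z hadj
  rcases C.cross _ _ _ _ hadj with rfl | hwz
  · exact C.H.loopless.irrefl _ hadj
  · obtain ⟨i, x, y, rfl, rfl⟩ := hcover w z hwz
    exact hF i x y hadj

theorem count_comap_mul_le [Fintype V] [Fintype V'] (C : DPCover G m) (f : G' ↪g G) {c : ℕ}
    (hc : ∀ b, (C.comap f).IsColoring b →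
      c ≤ Nat.card {F // C.IsColoring F ∧ F ∘ f = b}) :
    (C.comap f).count * c ≤ C.count := by
  let e : {F // C.IsColoring F} ≃
      Σ b : {b // (C.comap f).IsColoring b}, {F // C.IsColoring F ∧ F ∘ f = b.1} :=
    { toFun F := ⟨⟨F.1 ∘ f, F.2.comap f⟩, F.1, F.2, rfl⟩
      invFun x := ⟨x.2.1, x.2.2.1⟩
      left_inv F := rfl
      right_inv x := Sigma.subtype_ext (Subtype.ext x.2.2.2) rfl }
  classical
  rw [count, count, Nat.card_congr e, Nat.card_sigma]
  calc Nat.card {b // (C.comap f).IsColoring b} * c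
        = ∑ _b : {b // (C.comap f).IsColoring b}, c := by simp [Nat.card_eq_fintype_card]
    _ ≤ _ := Finset.sum_le_sum fun b _ => hc b.1 b.2

theorem sub_card_le_card_not_adj {ι : Type} [Fintype ι] (C : DPCover G m) (v : V) (w : ι → V)
    (c : ι → Fin m) (hw : ∀ q, G.Adj v (w q)) :
    m - Fintype.card ι ≤ Nat.card {j // ∀ q, ¬ C.H.Adj (v, j) (w q, c q)} := by
  classical
  rw [Nat.card_eq_fintype_card, Fintype.card_subtype]
  have hblocked : #{j | ∃ q, C.H.Adj (v, j) (w q, c q)} ≤ Fintype.card ι :=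
    calc #{j | ∃ q, C.H.Adj (v, j) (w q, c q)}
        = #(univ.biUnion fun q => {j | C.H.Adj (v, j) (w q, c q)}) := by
          congr 1; ext j; simp
      _ ≤ ∑ q, #{j | C.H.Adj (v, j) (w q, c q)} := card_biUnion_le
      _ ≤ ∑ _q : ι, 1 := sum_le_sum fun q _ => card_le_one.mpr fun j hj j' hj' =>
          C.matching (w q) v (hw q).symm (c q) j j'
            (mem_filter.mp hj).2.symm (mem_filter.mp hj').2.symm
      _ = Fintype.card ι := by simp
  have hsplit := card_filter_add_card_filter_not (s := (univ : Finset (Fin m)))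
    (fun j => ∃ q, C.H.Adj (v, j) (w q, c q))
  simp only [not_exists, card_univ, Fintype.card_fin] at hsplit
  omega

theorem prod_range_sub_le_count {p : ℕ} (C : DPCover (completeGraph (Fin p)) m) :
    ∏ q ∈ range p, (m - q) ≤ C.count := by
  induction p with
  | zero =>
    have : Nonempty {F : Fin 0 → Fin m // C.IsColoring F} :=
      ⟨⟨Fin.elim0, fun u => u.elim0⟩⟩
    exact Nat.card_pos
  | succ p ih =>
    let f := Embedding.completeGraph (Fin.castSuccEmb (n := p))
    rw [prod_range_succ]
    refine (Nat.mul_le_mul_right _ (ih (C.comap f))).trans (C.count_comap_mul_le f fun b hb => ?_)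
    have hext (j : Fin m) (hj : ∀ q, ¬ C.H.Adj (Fin.last p, j) (q.castSucc, b q)) :
        C.IsColoring (Fin.snoc b j) ∧ Fin.snoc b j ∘ f = b := by
      refine ⟨fun u v => ?_, funext fun q => by simp [f]⟩
      induction u using Fin.lastCases <;> induction v using Fin.lastCases
      · exact C.H.loopless.irrefl _
      · simpa using hj _
      · simpa using fun h => hj _ h.symm
      · simp only [Fin.snoc_castSucc]
        exact hb _ _
    calc m - p = m - Fintype.card (Fin p) := by rw [Fintype.card_fin]
      _ ≤ Nat.card {j // ∀ q, ¬ C.H.Adj (Fin.last p, j) (q.castSucc, b q)} :=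
        C.sub_card_le_card_not_adj _ _ _ fun q => (Fin.castSucc_lt_last q).ne'
      _ ≤ Nat.card {F // C.IsColoring F ∧ F ∘ f = b} :=
        Nat.card_le_card_of_injective (fun j => ⟨Fin.snoc b j.1, hext j.1 j.2⟩) fun j j' h =>
          Subtype.ext (by simpa using congrFun (congrArg Subtype.val h) (Fin.last p))

end DPCover

theorem SimpleGraph.injective_of_pairwise_adj {α V : Type} {G : SimpleGraph V} {u : α → V}
    (h : Pairwise fun a b => G.Adj (u a) (u b)) : Function.Injective u :=
  fun _ _ he => not_not.mp fun hne => (h hne).ne he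

theorem le_PDP {V : Type} [Fintype V] {G : SimpleGraph V} {m N : ℕ}
    (h : ∀ C : DPCover G m, N ≤ C.count) : N ≤ PDP G m :=
  le_csInf ⟨_, DPCover.standard G m, rfl⟩ fun _ ⟨C, hC⟩ => hC ▸ h C

namespace KGlue

variable {n p : ℕ} {V : Fin n → Type} {G : ∀ i, SimpleGraph (V i)} {U : ∀ i, Fin p → V i}
  {i : Fin n}

def cliqueEmb : completeGraph (Fin p) ↪g KGlue G U where
  toEmbedding := Function.Embedding.inl
  map_rel_iff' := Iff.rfl

open Classical in
noncomputable def incl (U : ∀ i, Fin p → V i) (i : Fin n) (x : V i) :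
    Fin p ⊕ (Σ i : Fin n, {x : V i // ∀ q, x ≠ U i q}) :=
  if h : ∃ q, x = U i q then Sum.inl h.choose else Sum.inr ⟨i, x, fun q hq => h ⟨q, hq⟩⟩

theorem incl_apply (hU : Function.Injective (U i)) (q : Fin p) :
    incl U i (U i q) = Sum.inl q := by
  have h : ∃ q', U i q = U i q' := ⟨q, rfl⟩
  rw [incl, dif_pos h]
  exact congrArg Sum.inl (hU h.choose_spec).symm

theorem incl_of_forall_ne {x : V i} (hx : ∀ q, x ≠ U i q) :
    incl U i x = Sum.inr ⟨i, x, hx⟩ :=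
  dif_neg fun ⟨q, hq⟩ => hx q hq

theorem incl_injective (hU : Function.Injective (U i)) : Function.Injective (incl U i) := by
  intro x y h
  rcases em (∃ q, x = U i q) with ⟨q, rfl⟩ | hx <;>
    rcases em (∃ q, y = U i q) with ⟨q', rfl⟩ | hy <;>
    simp_all [incl_apply hU, incl_of_forall_ne]

theorem incl_adj_incl_iff (hU : Pairwise fun q q' => (G i).Adj (U i q) (U i q')) {x y : V i} :
    (KGlue G U).Adj (incl U i x) (incl U i y) ↔ (G i).Adj x y := by
  have hinj := injective_of_pairwise_adj hU
  rcases em (∃ q, x = U i q) with ⟨q, rfl⟩ | hx <;>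
    rcases em (∃ q, y = U i q) with ⟨q', rfl⟩ | hy
  · rw [incl_apply hinj, incl_apply hinj]
    exact ⟨fun h => hU h, fun h he => h.ne (congrArg (U i) he)⟩
  all_goals simp_all [incl_apply hinj, incl_of_forall_ne, KGlue]

noncomputable def pieceEmb (hU : Pairwise fun q q' => (G i).Adj (U i q) (U i q')) :
    G i ↪g KGlue G U where
  toFun := incl U i
  inj' := incl_injective (injective_of_pairwise_adj hU)
  map_rel_iff' := incl_adj_incl_iff hU

@[simp]
theorem coe_pieceEmb (hU : Pairwise fun q q' => (G i).Adj (U i q) (U i q')) :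
    ⇑(pieceEmb hU) = incl U i :=
  rfl

theorem exists_incl_of_adj (i₀ : Fin n)
    {w z : Fin p ⊕ (Σ i : Fin n, {x : V i // ∀ q, x ≠ U i q})}
    (hU : ∀ i, Function.Injective (U i)) (hwz : (KGlue G U).Adj w z) :
    ∃ i x y, incl U i x = w ∧ incl U i y = z := by
  rcases w with q | ⟨i, x, hx⟩ <;> rcases z with q' | ⟨j, y, hy⟩
  · exact ⟨i₀, U i₀ q, U i₀ q', incl_apply (hU i₀) q, incl_apply (hU i₀) q'⟩
  · exact ⟨j, U j q, y, incl_apply (hU j) q, incl_of_forall_ne hy⟩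
  · exact ⟨i, x, U i q', incl_of_forall_ne hx, incl_apply (hU i) q'⟩
  · obtain ⟨rfl, -⟩ := hwz
    exact ⟨i, x, y, incl_of_forall_ne hx, incl_of_forall_ne hy⟩

theorem elim_comp_incl {α : Type} (hU : Function.Injective (U i)) {a : Fin p → α}
    {g : ∀ i, V i → α} (hg : ∀ q, g i (U i q) = a q) :
    Sum.elim a (fun s : Σ i, {x : V i // ∀ q, x ≠ U i q} => g s.1 s.2.1) ∘ incl U i =
      g i := by
  funext x
  rcases em (∃ q, x = U i q) with ⟨q, rfl⟩ | hx
  · simp [incl_apply hU, hg]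
  · simp [incl_of_forall_ne fun q hq => hx ⟨q, hq⟩]

theorem prod_card_le_card_extensions [∀ i, Finite (V i)] {m : ℕ} (i₀ : Fin n)
    (hU : ∀ i, Pairwise fun q q' => (G i).Adj (U i q) (U i q')) (C : DPCover (KGlue G U) m)
    (a : Fin p → Fin m) :
    ∏ i, Nat.card {g : V i → Fin m // (C.comap (pieceEmb (hU i))).IsColoring g ∧
      ∀ q, g (U i q) = a q} ≤
      Nat.card {F // C.IsColoring F ∧ F ∘ cliqueEmb (G := G) = a} := by
  have hinj i := injective_of_pairwise_adj (hU i)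
  rw [← Nat.card_pi]
  let glue (g : ∀ i, {g : V i → Fin m // (C.comap (pieceEmb (hU i))).IsColoring g ∧
      ∀ q, g (U i q) = a q}) :=
    Sum.elim a fun s : Σ i, {x : V i // ∀ q, x ≠ U i q} => (g s.1).1 s.2.1
  have hglue g i : glue g ∘ incl U i = (g i).1 :=
    elim_comp_incl (g := fun i => (g i).1) (hinj i) (g i).2.2
  refine Nat.card_le_card_of_injective (fun g => ⟨glue g, ?_, rfl⟩) fun g g' h => ?_
  · refine C.isColoring_of_comap (fun i => pieceEmb (hU i))
      (fun _ _ hwz => by simpa only [coe_pieceEmb] using exists_incl_of_adj i₀ hinj hwz)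
      fun i => ?_
    exact (hglue g i).symm ▸ (g i).2.1
  · funext i
    exact Subtype.ext ((hglue g i).symm.trans
      ((congrArg (· ∘ incl U i) (congrArg Subtype.val h)).trans (hglue g' i)))

end KGlue

theorem stmt_4_general {n p : ℕ} (hn : 2 ≤ n) {V : Fin n → Type}
    [∀ i, Fintype (V i)] [∀ i, DecidableEq (V i)]
    (G : ∀ i, SimpleGraph (V i)) (U : ∀ i, Fin p → V i)
    (hclique : ∀ i, ∀ q q' : Fin p, q ≠ q' → (G i).Adj (U i q) (U i q'))
    (m : ℕ) (k : Fin n → ℕ)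
    (hk : ∀ (i : Fin n) (C : DPCover (G i) m) (a : Fin p → Fin m),
      (∀ q q' : Fin p, ¬ C.H.Adj (U i q, a q) (U i q', a q')) →
      k i ≤ Nat.card { f : V i → Fin m // C.IsColoring f ∧ ∀ q, f (U i q) = a q }) :
    (∏ q ∈ Finset.range p, (m - q)) * ∏ i : Fin n, k i ≤ PDP (KGlue G U) m := by
  have hU i : Pairwise fun q q' => (G i).Adj (U i q) (U i q') := hclique i
  refine le_PDP fun C => ?_
  calc (∏ q ∈ range p, (m - q)) * ∏ i, k i
      ≤ (C.comap KGlue.cliqueEmb).count * ∏ i, k i :=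
        Nat.mul_le_mul_right _ (C.comap _).prod_range_sub_le_count
    _ ≤ C.count := C.count_comap_mul_le _ fun a ha => ?_
  refine (prod_le_prod' fun i _ => hk i _ a fun q q' => ?_).trans
    (KGlue.prod_card_le_card_extensions ⟨0, by omega⟩ hU C a)
  show ¬ C.H.Adj (KGlue.incl U i (U i q), a q) (KGlue.incl U i (U i q'), a q')
  rw [KGlue.incl_apply (injective_of_pairwise_adj (hU i)),
    KGlue.incl_apply (injective_of_pairwise_adj (hU i))]
  exact ha q q'

theorem stmt_4 {n p : ℕ} (hn : 2 ≤ n) (hp : 1 ≤ p) {V : Fin n → Type}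
    [∀ i, Fintype (V i)] [∀ i, DecidableEq (V i)]
    (G : ∀ i, SimpleGraph (V i)) (U : ∀ i, Fin p → V i)
    (hclique : ∀ i, ∀ q q' : Fin p, q ≠ q' → (G i).Adj (U i q) (U i q'))
    (m : ℕ) (hm : 1 ≤ m) (k : Fin n → ℕ)
    (hk : ∀ (i : Fin n) (C : DPCover (G i) m) (a : Fin p → Fin m),
      (∀ q q' : Fin p, ¬ C.H.Adj (U i q, a q) (U i q', a q')) →
      k i ≤ Nat.card { f : V i → Fin m // C.IsColoring f ∧ ∀ q, f (U i q) = a q }) :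
    (∏ q ∈ Finset.range p, (m - q)) * ∏ i : Fin n, k i ≤ PDP (KGlue G U) m :=
  stmt_4_general hn G U hclique m k hk
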